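/- arXiv:2603.28266 — 5 statements merged into one kernel-verified Lean document; each statement's English description precedes it below -/
import Mathlib

section
/- Let m(x) = ∏_{i ∈ I} x_i be a monomial on 𝔽₂^n with |I| = k, and let U be a k-dimensional linear subspace of 𝔽₂^n. Then ∑_{x ∈ U} m(x) ≠ 0 (in 𝔽₂) if and only if the projection π_I : 𝔽₂^n → 𝔽₂^I onto the coordinates in I maps U bijectively onto 𝔽₂^I (equivalently, the k × k matrix formed by the columns of a generator matrix of U indexed by I has rank k). -/
/-- Sum of a function over a (finite) set of points. -/
noncomputable def setSum {α β : Type*} [Fintype α] [AddCommMonoid β]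
    (S : Set α) (F : α → β) : β :=
  ∑ x ∈ (Set.toFinite S).toFinset, F x

theorem stmt_9 (n k : ℕ) (I : Finset (Fin n)) (hI : I.card = k)
    (U : Submodule (ZMod 2) (Fin n → ZMod 2)) (hU : Module.finrank (ZMod 2) U = k) :
    setSum (U : Set (Fin n → ZMod 2)) (fun x => ∏ i ∈ I, x i) ≠ 0 ↔
      Set.BijOn (fun (x : Fin n → ZMod 2) (i : I) => x i.1)
        (U : Set (Fin n → ZMod 2)) Set.univ := by
  classical
  set q : U →ₗ[ZMod 2] (↥I → ZMod 2) :=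
    { toFun := fun u i => u.1 i.1
      map_add' := fun u v => rfl
      map_smul' := fun c u => rfl } with hq
  have hrank : Module.finrank (ZMod 2) (↥I → ZMod 2) = k := by
    simp [Module.finrank_pi, hI]
  -- BijOn ↔ Bijective q
  have hbij : (Set.BijOn (fun (x : Fin n → ZMod 2) (i : I) => x i.1)
      (U : Set (Fin n → ZMod 2)) Set.univ) ↔ Function.Bijective q := by
    constructor
    · rintro ⟨_, hinj, hsurj⟩
      refine ⟨fun u v h => Subtype.ext (hinj u.2 v.2 h), fun y => ?_⟩
      obtain ⟨x, hx, hxy⟩ := hsurj (Set.mem_univ y)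
      exact ⟨⟨x, hx⟩, hxy⟩
    · rintro ⟨hinj, hsurj⟩
      refine ⟨fun x _ => Set.mem_univ _, fun a ha b hb h => ?_, fun y _ => ?_⟩
      · exact congrArg Subtype.val (hinj (a₁ := ⟨a, ha⟩) (a₂ := ⟨b, hb⟩) h)
      · obtain ⟨u, hu⟩ := hsurj y
        exact ⟨u.1, u.2, hu⟩
  have hinj_iff : Function.Injective q ↔ Function.Bijective q := by
    constructor
    · intro h
      exact ⟨h, (LinearMap.injective_iff_surjective_of_finrank_eq_finrank
        (by rw [hU, hrank])).mp h⟩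
    · exact fun h => h.1
  -- rewrite the sum
  have hsum : setSum (U : Set (Fin n → ZMod 2)) (fun x => ∏ i ∈ I, x i)
      = ∑ u : U, ∏ i : I, q u i := by
    rw [setSum, Finset.sum_subtype (p := fun x => x ∈ U) _
      (fun x => Set.Finite.mem_toFinset _) (fun x => ∏ i ∈ I, x i)]
    refine Finset.sum_congr rfl fun u _ => ?_
    rw [← Finset.prod_coe_sort I (fun i => u.1 i)]
    rfl
  rw [hsum, hbij, ← hinj_iff]
  set f : U → ZMod 2 := fun u => ∏ i : I, q u i with hf
  constructor
  · -- contrapositive: not injective → sum = 0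
    intro hne
    by_contra hni
    apply hne
    -- kernel nontrivial
    have : ∃ z : U, q z = 0 ∧ z ≠ 0 := by
      simp only [Function.Injective] at hni
      push_neg at hni
      obtain ⟨a, b, hab, hne'⟩ := hni
      exact ⟨a - b, by rw [map_sub, hab, sub_self], sub_ne_zero.mpr hne'⟩
    obtain ⟨z, hz0, hzne⟩ := this
    have h2 : ∀ w : U, w + w = 0 := fun w => by
      rw [← two_smul (ZMod 2) w, show ((2:ZMod 2)) = 0 by decide, zero_smul]
    have h2' : ∀ a : ZMod 2, a + a = 0 := by decide
    apply Finset.sum_involution (g := fun u _ => u + z)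
    · intro u _
      have : q (u + z) = q u := by rw [map_add, hz0, add_zero]
      show f u + f (u + z) = 0
      rw [hf]
      simp only [this]
      exact h2' _
    · intro u _ _
      intro h
      exact hzne (by simpa using congrArg (fun w => w - u) h)
    · intro u _; exact Finset.mem_univ _
    · intro u _
      rw [add_assoc, h2, add_zero]
  · -- injective → sum = 1 ≠ 0
    intro hinj
    have hsurj := (hinj_iff.mp hinj).2
    have hbijq : Function.Bijective q := ⟨hinj, hsurj⟩
    have : ∑ u : U, f u = ∑ y : (↥I → ZMod 2), ∏ i : I, y i := by
      exact Fintype.sum_bijective q hbijq _ _ (fun u => rfl)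
    rw [this]
    have hval : ∀ y : (↥I → ZMod 2), (∏ i : I, y i)
        = if y = (fun _ => 1) then 1 else 0 := by
      intro y
      by_cases h : y = fun _ => 1
      · simp [h]
      · rw [if_neg h]
        have : ∃ i : ↥I, y i = 0 := by
          by_contra hc
          push_neg at hc
          exact h (funext fun i => by
            have h3 := hc i
            revert h3; generalize y i = a; revert a; decide)
        obtain ⟨i, hi⟩ := this
        exact Finset.prod_eq_zero (Finset.mem_univ i) hi
    simp only [hval, Finset.sum_ite_eq', Finset.mem_univ, if_true]
    exact one_ne_zero
end

section
/- Let m(x) = x₁x₂⋯x_k be the monomial in the first k variables on 𝔽₂^n. The number of k-dimensional linear subspaces U of 𝔽₂^n with ∑_{x∈U} m(x) ≠ 0 equals 2^{k(n−k)}. -/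
open Function LinearMap Module

theorem setSum_eq_sum_subtype {α β : Type*} [Fintype α] [AddCommMonoid β] (S : Set α)
    [Fintype S] (F : α → β) : setSum S F = ∑ x : S, F x :=
  Finset.sum_subtype _ (fun _ => Set.Finite.mem_toFinset _) F

theorem Fintype.sum_eq_zero_of_add_right_invariant {G R : Type*} [AddCommGroup G]
    [Module (ZMod 2) G] [Fintype G] [AddCommGroup R] [Module (ZMod 2) R] (f : G → R) {z : G}
    (hz : z ≠ 0) (hf : ∀ x, f (x + z) = f x) : ∑ x, f x = 0 :=
  Finset.sum_involution (fun x _ => x + z) (fun x _ => by rw [hf, ZModModule.add_self])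
    (fun x _ _ h => hz (by simpa using h)) (fun _ _ => Finset.mem_univ _)
    (fun x _ => by rw [add_assoc, ZModModule.add_self, add_zero])

theorem ZMod.sum_prod_eq_one (ι : Type*) [Fintype ι] [DecidableEq ι] :
    ∑ y : ι → ZMod 2, ∏ i, y i = 1 := by
  rw [← Fintype.prod_sum fun _ a => a]
  exact Finset.prod_eq_one fun _ _ => rfl

section MonomialSum

variable {V ι : Type*} [AddCommGroup V] [Module (ZMod 2) V] [Fintype ι]
  (π : V →ₗ[ZMod 2] ι → ZMod 2) (U : Submodule (ZMod 2) V) [Fintype U]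

theorem sum_prod_eq_zero_of_not_injective (h : ¬ Injective (π.domRestrict U)) :
    ∑ x : U, ∏ i, π x i = 0 := by
  obtain ⟨z, hzU, hz, hz0⟩ : ∃ z ∈ U, π z = 0 ∧ z ≠ 0 := by
    simpa [injective_iff_map_eq_zero] using h
  refine Fintype.sum_eq_zero_of_add_right_invariant (z := ⟨z, hzU⟩) _ (by simpa using hz0) ?_
  simp [hz]

theorem sum_prod_eq_one_of_bijective [DecidableEq ι] (h : Bijective (π.domRestrict U)) :
    ∑ x : U, ∏ i, π x i = 1 :=
  (Fintype.sum_bijective _ h _ _ fun _ => rfl).trans (ZMod.sum_prod_eq_one ι)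

theorem finrank_eq_card_and_sum_prod_ne_zero_iff [DecidableEq ι] :
    finrank (ZMod 2) U = Fintype.card ι ∧ ∑ x : U, ∏ i, π x i ≠ 0 ↔
      Bijective (π.domRestrict U) := by
  constructor
  · rintro ⟨hrank, hsum⟩
    have hinj : Injective (π.domRestrict U) := by
      by_contra h
      exact hsum (sum_prod_eq_zero_of_not_injective π U h)
    rw [← finrank_fintype_fun_eq_card (ZMod 2)] at hrank
    exact ⟨hinj, (injective_iff_surjective_of_finrank_eq_finrank hrank).mp hinj⟩
  · intro h
    refine ⟨?_, by simp [sum_prod_eq_one_of_bijective π U h]⟩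
    rw [(LinearEquiv.ofBijective _ h).finrank_eq, finrank_fintype_fun_eq_card (ZMod 2)]

end MonomialSum

section Sections

variable {R V W : Type*} [Ring R] [AddCommGroup V] [Module R V] [AddCommGroup W] [Module R W]
  {π : V →ₗ[R] W}

theorem LinearMap.bijective_domRestrict_range_of_comp_eq_id {σ : W →ₗ[R] V}
    (hσ : π ∘ₗ σ = id) : Bijective (π.domRestrict (range σ)) := by
  have hπσ (w : W) : π (σ w) = w := LinearMap.congr_fun hσ w
  constructor
  · rintro ⟨_, w, rfl⟩ ⟨_, w', rfl⟩ h
    have : w = w' := by simpa [hπσ] using h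
    simp [this]
  · exact fun w => ⟨⟨σ w, w, rfl⟩, hπσ w⟩

theorem LinearMap.eq_of_comp_eq_id_of_range_eq {σ σ' : W →ₗ[R] V} (hσ : π ∘ₗ σ = id)
    (hσ' : π ∘ₗ σ' = id) (h : range σ = range σ') : σ = σ' := by
  ext w
  obtain ⟨w', hw'⟩ : σ w ∈ range σ' := h ▸ mem_range_self σ w
  have : w' = w := by
    simpa [← LinearMap.comp_apply, hσ, hσ'] using congrArg π hw'
  rw [← hw', this]

theorem LinearMap.exists_range_eq_of_bijective_domRestrict {U : Submodule R V}
    (hU : Bijective (π.domRestrict U)) : ∃ σ : W →ₗ[R] V, π ∘ₗ σ = id ∧ range σ = U := by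
  let e := LinearEquiv.ofBijective _ hU
  refine ⟨U.subtype ∘ₗ e.symm.toLinearMap, ?_, ?_⟩
  · ext w
    exact e.apply_symm_apply w
  · rw [range_comp, LinearEquiv.range, Submodule.map_top, Submodule.range_subtype]

def LinearMap.sectionsEquiv {s : W →ₗ[R] V} (hs : π ∘ₗ s = id) :
    {σ : W →ₗ[R] V // π ∘ₗ σ = id} ≃ (W →ₗ[R] ker π) where
  toFun σ := codRestrict (ker π) (σ.1 - s) fun w => by
    simp [← LinearMap.comp_apply, σ.2, hs]
  invFun f := ⟨s + (ker π).subtype ∘ₗ f, by ext w; simp [← LinearMap.comp_apply, hs]⟩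
  left_inv σ := by ext; simp
  right_inv f := by ext; simp

end Sections

theorem LinearMap.ncard_setOf_bijective_domRestrict {K V W : Type*} [Field K] [Finite K]
    [AddCommGroup V] [Module K V] [FiniteDimensional K V] [AddCommGroup W] [Module K W]
    [FiniteDimensional K W] {π : V →ₗ[K] W} (hπ : Surjective π) :
    {U : Submodule K V | Bijective (π.domRestrict U)}.ncard =
      Nat.card K ^ (finrank K W * (finrank K V - finrank K W)) := by
  obtain ⟨s, hs⟩ := π.exists_rightInverse_of_surjective (range_eq_top.2 hπ)
  have hset : {U : Submodule K V | Bijective (π.domRestrict U)} =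
      Set.range fun σ : {σ : W →ₗ[K] V // π ∘ₗ σ = id} => range σ.1 := by
    ext U
    constructor
    · intro hU
      obtain ⟨σ, hσ, rfl⟩ := exists_range_eq_of_bijective_domRestrict hU
      exact ⟨⟨σ, hσ⟩, rfl⟩
    · rintro ⟨σ, rfl⟩
      exact bijective_domRestrict_range_of_comp_eq_id σ.2
  have hker : finrank K (ker π) = finrank K V - finrank K W := by
    rw [← finrank_range_add_finrank_ker π, range_eq_top.2 hπ, finrank_top,
      Nat.add_sub_cancel_left]
  have hinj : Injective fun σ : {σ : W →ₗ[K] V // π ∘ₗ σ = id} => range σ.1 :=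
    fun σ σ' h => Subtype.ext (eq_of_comp_eq_id_of_range_eq σ.2 σ'.2 h)
  rw [hset, Set.ncard_range_of_injective hinj, Nat.card_congr (sectionsEquiv hs),
    natCard_eq_pow_finrank (K := K), finrank_linearMap, hker]

theorem stmt_10 (n k : ℕ) (hk : k ≤ n) :
    Set.ncard {U : Submodule (ZMod 2) (Fin n → ZMod 2) |
        Module.finrank (ZMod 2) U = k ∧
        setSum (U : Set (Fin n → ZMod 2))
          (fun x => ∏ i ∈ Finset.univ.filter (fun i : Fin n => (i : ℕ) < k), x i) ≠ 0} =
      2 ^ (k * (n - k)) := by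
  classical
  let π : (Fin n → ZMod 2) →ₗ[ZMod 2] {i : Fin n // (i : ℕ) < k} → ZMod 2 :=
    funLeft (ZMod 2) (ZMod 2) Subtype.val
  have hcard : Fintype.card {i : Fin n // (i : ℕ) < k} = k := by
    rw [Fintype.card_subtype, Fin.card_filter_val_lt, min_eq_right hk]
  have hset : {U : Submodule (ZMod 2) (Fin n → ZMod 2) |
        Module.finrank (ZMod 2) U = k ∧
        setSum (U : Set (Fin n → ZMod 2))
          (fun x => ∏ i ∈ Finset.univ.filter (fun i : Fin n => (i : ℕ) < k), x i) ≠ 0} =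
      {U | Bijective (π.domRestrict U)} := by
    ext U
    rw [Set.mem_ofPred_eq, Set.mem_ofPred_eq, ← finrank_eq_card_and_sum_prod_ne_zero_iff, hcard,
      setSum_eq_sum_subtype]
    simp_rw [Finset.prod_subtype _ (fun _ => Finset.mem_filter_univ _)]
    rfl
  rw [hset, ncard_setOf_bijective_domRestrict
      (funLeft_surjective_of_injective _ _ _ Subtype.val_injective)]
  simp [hcard]
end

section
/- Let f be a 0-intersecting, k-homogeneous Boolean function on 𝔽₂^n with t monomials (the variable sets of distinct monomials are pairwise disjoint). With G = ∏_{i=0}^{k−1}(2^k − 2^i), the number of k-dimensional subspaces U with ∑_{x∈U} f(x) ≠ 0 equals (2^{kn−1}/G)·(1 − (1 − G/2^{k²−1})^t). -/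
open Finset Function Matrix Module

theorem Fintype.card_matrix {m n α : Type*} [Fintype m] [Fintype n] [DecidableEq m]
    [DecidableEq n] [Fintype α] :
    Fintype.card (Matrix m n α) = Fintype.card α ^ (Fintype.card n * Fintype.card m) := by
  rw [pow_mul]
  exact (Fintype.card_fun (α := m) (β := n → α)).trans (by rw [Fintype.card_fun])

theorem Nat.cast_prod_range_pow_sub_pow {R : Type*} [CommRing R] {q : ℕ} (hq : 1 ≤ q) (k : ℕ) :
    ((∏ i ∈ range k, (q ^ k - q ^ i) : ℕ) : R) = ∏ i ∈ range k, ((q : R) ^ k - q ^ i) := by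
  rw [Nat.cast_prod]
  exact prod_congr rfl fun i hi => by
    rw [Nat.cast_sub (Nat.pow_le_pow_right hq (mem_range.1 hi).le), Nat.cast_pow, Nat.cast_pow]

theorem injective_of_range_eq {F V W : Type*} [DivisionRing F] [AddCommGroup V] [Module F V]
    [FiniteDimensional F V] [AddCommGroup W] [Module F W] {φ : V →ₗ[F] W} {U : Submodule F W}
    (hU : finrank F U = finrank F V) (hφ : LinearMap.range φ = U) : Injective φ := by
  rw [← LinearMap.ker_eq_bot, ← Submodule.finrank_eq_zero]
  have := LinearMap.finrank_range_add_finrank_ker φ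
  rw [hφ, hU] at this
  omega

section FiniteField

variable {F : Type*} [Field F] [Fintype F]

theorem card_injective_linearMap {U : Type*} [AddCommGroup U] [Module F U] [Finite U] {k : ℕ}
    (hk : k ≤ finrank F U) :
    Nat.card {φ : (Fin k → F) →ₗ[F] U // Injective φ} =
      ∏ i ∈ range k, (Fintype.card F ^ finrank F U - Fintype.card F ^ i) := by
  have single_smul (φ : (Fin k → F) →ₗ[F] U) (i : Fin k) (x : F) :
      x • φ (Pi.single i 1) = φ (Pi.single i x) := by
    rw [← map_smul, ← Pi.single_smul, smul_eq_mul, mul_one]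
  let e : {s : Fin k → U // LinearIndependent F s} ≃ {φ : (Fin k → F) →ₗ[F] U // Injective φ} :=
    { toFun := fun s => ⟨Fintype.linearCombination F s.1,
        linearIndependent_iff_injective_fintypeLinearCombination.1 s.2⟩
      invFun := fun φ => ⟨fun i => φ.1 (Pi.single i 1),
        linearIndependent_iff_injective_fintypeLinearCombination.2 <| by
          convert φ.2
          exact LinearMap.pi_ext fun i x => by simp [single_smul]⟩
      left_inv := fun s => Subtype.ext <| funext fun i => by simp
      right_inv := fun φ => Subtype.ext <| LinearMap.pi_ext fun i x => by simp [single_smul] }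
  rw [← Nat.card_congr e, card_linearIndependent hk, Fin.prod_univ_eq_prod_range
    (fun i => Fintype.card F ^ finrank F U - Fintype.card F ^ i)]

theorem card_injective_toLin' [DecidableEq F] {m : Type*} [Fintype m] [DecidableEq m] {k : ℕ}
    (hk : k ≤ Fintype.card m) :
    #{R : Matrix m (Fin k) F | Injective (toLin' R)} =
      ∏ i ∈ range k, (Fintype.card F ^ Fintype.card m - Fintype.card F ^ i) := by
  have h := card_injective_linearMap (F := F) (U := m → F) (k := k) (by simpa using hk)
  rw [finrank_fintype_fun_eq_card] at h
  rw [← h, ← Fintype.card_subtype, ← Nat.card_eq_fintype_card]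
  exact Nat.card_congr (toLin'.toEquiv.subtypeEquiv fun R => Iff.rfl)

theorem card_range_toLin'_eq [DecidableEq F] {m : Type*} [Fintype m] [DecidableEq m] {k : ℕ}
    (U : Submodule F (m → F)) (hU : finrank F U = k) :
    #{R : Matrix m (Fin k) F | LinearMap.range (toLin' R) = U} =
      ∏ i ∈ range k, (Fintype.card F ^ k - Fintype.card F ^ i) := by
  have hk : finrank F U = finrank F (Fin k → F) := by simpa using hU
  let e : {φ : (Fin k → F) →ₗ[F] (m → F) // LinearMap.range φ = U} ≃
      {ψ : (Fin k → F) →ₗ[F] U // Injective ψ} :=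
    { toFun := fun φ => ⟨φ.1.codRestrict U fun y =>
        φ.2.le (LinearMap.mem_range_self φ.1 y),
        fun a b hab => injective_of_range_eq hk φ.2 (congrArg Subtype.val hab)⟩
      invFun := fun ψ => ⟨U.subtype ∘ₗ ψ.1, by
        rw [LinearMap.range_comp, LinearMap.range_eq_top.2, Submodule.map_top,
          Submodule.range_subtype]
        exact (LinearMap.injective_iff_surjective_of_finrank_eq_finrank hk.symm).1 ψ.2⟩
      left_inv := fun φ => rfl
      right_inv := fun ψ => rfl }
  have h := card_injective_linearMap (F := F) (U := U) (k := k) hU.ge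
  rw [hU] at h
  rw [← h, ← Nat.card_congr e, ← Fintype.card_subtype, ← Nat.card_eq_fintype_card]
  exact Nat.card_congr (toLin'.toEquiv.subtypeEquiv fun R => Iff.rfl)

theorem card_injective_toLin'_range [DecidableEq F] {m : Type*} [Fintype m] [DecidableEq m]
    {k : ℕ} (P : Submodule F (m → F) → Prop) [DecidablePred P] :
    #{R : Matrix m (Fin k) F | Injective (toLin' R) ∧ P (LinearMap.range (toLin' R))} =
      (∏ i ∈ range k, (Fintype.card F ^ k - Fintype.card F ^ i)) *
        {U : Submodule F (m → F) | finrank F U = k ∧ P U}.ncard := by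
  set S := {U : Submodule F (m → F) | finrank F U = k ∧ P U}
  have hS : S.Finite := S.toFinite
  rw [Set.ncard_eq_toFinset_card S hS, mul_comm, ← smul_eq_mul, ← sum_const]
  refine (card_eq_sum_card_fiberwise (f := fun R => LinearMap.range (toLin' R))
    fun R hR => ?_).trans (sum_congr rfl fun U hU => ?_)
  · obtain ⟨hinj, hP⟩ := (mem_filter.1 hR).2
    simpa [S] using ⟨(LinearMap.finrank_range_of_inj hinj).trans (by simp), hP⟩
  · obtain ⟨hUk, hPU⟩ : finrank F U = k ∧ P U := by simpa [S] using hU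
    rw [← card_range_toLin'_eq U hUk, filter_filter]
    congr 1
    refine filter_congr fun R _ => ⟨fun h => h.2, fun h => ⟨⟨?_, h ▸ hPU⟩, h⟩⟩
    exact injective_of_range_eq (by simpa using hUk) h

end FiniteField

theorem setSum_range_of_injective {α A β : Type*} [Fintype α] [Fintype A] [AddCommMonoid β]
    {φ : A → α} (hφ : Injective φ) (F : α → β) :
    setSum (Set.range φ) F = ∑ a, F (φ a) := by
  classical
  rw [setSum, ← sum_image fun a _ b _ h => hφ h]
  congr 1
  ext
  simp

theorem sum_prod_restrict_mul_prod_card {ι κ L M : Type*} [Fintype ι] [DecidableEq ι] [Fintype κ]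
    [DecidableEq κ] [Fintype L] [CommSemiring M] (I : κ → Finset ι) (hI : Pairwise (Disjoint on I))
    (g : ∀ i, (I i → L) → M) :
    (∑ R : ι → L, ∏ i, g i fun j => R j) * ∏ i, (Fintype.card (I i → L) : M) =
      Fintype.card (ι → L) * ∏ i, ∑ v, g i v := by
  set C := (univ.biUnion I)ᶜ
  let res : (ι → L) → (∀ i, I i → L) × (C → L) := fun R => (fun i j => R j, fun j => R j)
  have hres_inj : Injective res := by
    intro R₁ R₂ h
    funext j
    by_cases hj : j ∈ univ.biUnion I
    · obtain ⟨i, -, hji⟩ := mem_biUnion.1 hj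
      exact congrFun (congrFun (congrArg Prod.fst h) i) ⟨j, hji⟩
    · exact congrFun (congrArg Prod.snd h) ⟨j, mem_compl.2 hj⟩
  have hcard : Fintype.card (ι → L) = Fintype.card (∀ i, I i → L) * Fintype.card (C → L) := by
    have hunion : #(univ.biUnion I) = ∑ i, #(I i) :=
      card_biUnion fun i _ j _ hij => hI hij
    have hle := card_le_univ (univ.biUnion I)
    simp only [Fintype.card_fun, Fintype.card_pi, Fintype.card_coe, prod_pow_eq_pow_sum, ← pow_add,
      C, card_compl]
    congr 1
    omega
  have hres : Bijective res :=
    (Fintype.bijective_iff_injective_and_card res).2 ⟨hres_inj, by rw [Fintype.card_prod, hcard]⟩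
  have hsum : ∑ R : ι → L, ∏ i, g i (fun j => R j) =
      Fintype.card (C → L) * ∏ i, ∑ v, g i v := by
    rw [Fintype.sum_bijective res hres _ (fun p => ∏ i, g i (p.1 i)) fun _ => rfl,
      Fintype.sum_prod_type, Fintype.prod_sum]
    simp only [sum_const, card_univ, nsmul_eq_mul, ← mul_sum]
  rw [hsum, hcard]
  push_cast [Fintype.card_pi]
  ring

section CharTwo

variable {V J : Type*} [AddCommGroup V] [Module (ZMod 2) V] [Fintype V] [Fintype J]

theorem sum_prod_apply_eq_zero_of_not_injective (ψ : V →ₗ[ZMod 2] (J → ZMod 2))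
    (hψ : ¬Injective ψ) : ∑ y, ∏ j, ψ y j = 0 := by
  obtain ⟨y₀, hy₀, hne⟩ := (Submodule.ne_bot_iff _).1 (mt LinearMap.ker_eq_bot.1 hψ)
  have two_y₀ : y₀ + y₀ = 0 := by
    rw [← two_smul (ZMod 2), show (2 : ZMod 2) = 0 from rfl, zero_smul]
  refine sum_ninvolution (· + y₀) (fun y => ?_) (fun y _ => by simpa using hne)
    (fun _ => mem_univ _) (fun y => by simp [add_assoc, two_y₀])
  rw [map_add, LinearMap.mem_ker.1 hy₀, add_zero, CharTwo.add_self_eq_zero]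

theorem sum_prod_apply_eq_one_of_bijective [DecidableEq J] (ψ : V →ₗ[ZMod 2] (J → ZMod 2))
    (hψ : Bijective ψ) : ∑ y, ∏ j, ψ y j = 1 := by
  rw [Fintype.sum_bijective ψ hψ _ (fun z => ∏ j, z j) fun _ => rfl,
    ← Fintype.prod_sum fun _ (a : ZMod 2) => a]
  simp [show ∑ a : ZMod 2, a = 1 from rfl]

theorem sum_prod_mulVec_ne_zero_iff [DecidableEq J] {k : ℕ} (hJ : Fintype.card J = k)
    (R : Matrix J (Fin k) (ZMod 2)) : ∑ y, ∏ j, (R *ᵥ y) j ≠ 0 ↔ Injective (toLin' R) := by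
  refine ⟨fun h => by_contra fun hR => h (sum_prod_apply_eq_zero_of_not_injective _ hR),
    fun hR => ?_⟩
  have hbij : Bijective (toLin' R) := ⟨hR,
    (LinearMap.injective_iff_surjective_of_finrank_eq_finrank (by simp [hJ])).1 hR⟩
  simpa using (sum_prod_apply_eq_one_of_bijective _ hbij).trans_ne one_ne_zero

theorem eq_zero_or_eq_one_of_zmod_two : ∀ v : ZMod 2, v = 0 ∨ v = 1 := by decide

def signChar : AddChar (ZMod 2) ℚ where
  toFun v := if v = 0 then 1 else -1
  map_zero_eq_one' := rfl
  map_add_eq_mul' a b := by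
    rcases eq_zero_or_eq_one_of_zmod_two a with rfl | rfl <;>
      rcases eq_zero_or_eq_one_of_zmod_two b with rfl | rfl <;>
      simp [show (1 + 1 : ZMod 2) = 0 from rfl]

theorem signChar_apply (v : ZMod 2) : signChar v = if v = 0 then 1 else -1 := rfl

theorem signChar_sum {ι : Type*} (s : Finset ι) (g : ι → ZMod 2) :
    signChar (∑ i ∈ s, g i) = ∏ i ∈ s, signChar (g i) := by
  classical
  induction s using Finset.induction_on with
  | empty => simp
  | insert a s ha ih => rw [sum_insert ha, prod_insert ha, AddChar.map_add_eq_mul, ih]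

theorem sum_signChar {α : Type*} (s : Finset α) (g : α → ZMod 2) :
    ∑ x ∈ s, signChar (g x) = #s - 2 * #{x ∈ s | g x ≠ 0} := by
  have h (v : ZMod 2) : signChar v = 1 - 2 * if v ≠ 0 then 1 else 0 := by
    rcases eq_zero_or_eq_one_of_zmod_two v with rfl | rfl <;> norm_num [signChar_apply]
  simp only [h, sum_sub_distrib, ← mul_sum, sum_boole, sum_const, nsmul_one]

theorem sum_signChar_sum_prod_mulVec [DecidableEq J] {k : ℕ} (hJ : Fintype.card J = k) :
    ∑ v : Matrix J (Fin k) (ZMod 2), signChar (∑ y, ∏ j, (v *ᵥ y) j) =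
      2 ^ (k * k) - 2 * ∏ i ∈ range k, ((2 : ℚ) ^ k - 2 ^ i) := by
  rw [sum_signChar, filter_congr fun v _ => sum_prod_mulVec_ne_zero_iff hJ v,
    card_injective_toLin' hJ.ge, card_univ, Fintype.card_matrix, ZMod.card, hJ,
    Nat.cast_prod_range_pow_sub_pow one_le_two]
  simp

end CharTwo

section Blocks

variable {n k t : ℕ} {I : Fin t → Finset (Fin n)} {f : (Fin n → ZMod 2) → ZMod 2}

theorem sum_apply_mulVec_eq_sum_blocks (hf : ∀ x, f x = ∑ i, ∏ j ∈ I i, x j)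
    (R : Matrix (Fin n) (Fin k) (ZMod 2)) :
    ∑ y, f (R *ᵥ y) = ∑ i, ∑ y, ∏ j, (R.submatrix ((↑) : I i → Fin n) id *ᵥ y) j := by
  simp only [hf]
  rw [sum_comm]
  exact sum_congr rfl fun i _ => sum_congr rfl fun y _ => (prod_coe_sort (I i) _).symm

theorem injective_of_sum_apply_mulVec_ne_zero (hf : ∀ x, f x = ∑ i, ∏ j ∈ I i, x j)
    {R : Matrix (Fin n) (Fin k) (ZMod 2)} (hR : ∑ y, f (R *ᵥ y) ≠ 0) : Injective (toLin' R) := by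
  rw [sum_apply_mulVec_eq_sum_blocks hf] at hR
  obtain ⟨i, -, hi⟩ := exists_ne_zero_of_sum_ne_zero hR
  by_contra hnot
  have hrestrict : toLin' (R.submatrix ((↑) : I i → Fin n) id) =
      LinearMap.funLeft (ZMod 2) (ZMod 2) ((↑) : I i → Fin n) ∘ₗ toLin' R := rfl
  have hblock : ¬Injective (toLin' (R.submatrix ((↑) : I i → Fin n) id)) := by
    rw [hrestrict, LinearMap.coe_comp]
    exact fun h => hnot h.of_comp
  simpa using hi (sum_prod_apply_eq_zero_of_not_injective _ hblock)

theorem prod_mul_ncard_subspaces_eq (hf : ∀ x, f x = ∑ i, ∏ j ∈ I i, x j) :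
    (∏ i ∈ range k, (2 ^ k - 2 ^ i)) *
        {U : Submodule (ZMod 2) (Fin n → ZMod 2) |
          finrank (ZMod 2) U = k ∧ setSum (U : Set (Fin n → ZMod 2)) f ≠ 0}.ncard =
      #{R : Matrix (Fin n) (Fin k) (ZMod 2) | ∑ y, f (R *ᵥ y) ≠ 0} := by
  have h := card_injective_toLin'_range (F := ZMod 2) (m := Fin n) (k := k)
    fun U => setSum (U : Set (Fin n → ZMod 2)) f ≠ 0
  rw [ZMod.card] at h
  rw [← h]
  refine congrArg card (filter_congr fun R _ => ?_)
  have hsum (hR : Injective (toLin' R)) :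
      setSum (LinearMap.range (toLin' R) : Set (Fin n → ZMod 2)) f = ∑ y, f (R *ᵥ y) := by
    simp [LinearMap.coe_range, setSum_range_of_injective hR]
  exact ⟨fun ⟨hR, h⟩ => hsum hR ▸ h,
    fun h => have hR := injective_of_sum_apply_mulVec_ne_zero hf h; ⟨hR, (hsum hR).symm ▸ h⟩⟩

theorem sum_signChar_sum_apply_mulVec (hk : 1 ≤ k) (hcard : ∀ i, (I i).card = k)
    (hdisj : ∀ i j, i ≠ j → Disjoint (I i) (I j)) (hf : ∀ x, f x = ∑ i, ∏ j ∈ I i, x j) :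
    ∑ R : Matrix (Fin n) (Fin k) (ZMod 2), signChar (∑ y, f (R *ᵥ y)) =
      2 ^ (k * n) * (1 - (∏ i ∈ range k, ((2 : ℚ) ^ k - 2 ^ i)) / 2 ^ (k ^ 2 - 1)) ^ t := by
  set G := ∏ i ∈ range k, ((2 : ℚ) ^ k - 2 ^ i)
  set A : ℚ := 2 ^ (k ^ 2 - 1)
  have hA : A ≠ 0 := by positivity
  have hkk : (2 : ℚ) ^ (k * k) = 2 * A := by
    rw [← pow_succ', ← sq]
    congr 1
    have := Nat.one_le_pow 2 k hk
    omega
  have hcardI (i : Fin t) : Fintype.card (I i) = k := by simp [hcard]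
  have hcard_block (i : Fin t) : Fintype.card (I i → Fin k → ZMod 2) = 2 ^ (k * k) := by
    simp [hcard, ← pow_mul]
  refine mul_right_cancel₀ (pow_ne_zero t (mul_ne_zero two_ne_zero hA)) ?_
  calc (∑ R : Matrix (Fin n) (Fin k) (ZMod 2), signChar (∑ y, f (R *ᵥ y))) * (2 * A) ^ t
      = (∑ R : Fin n → Fin k → ZMod 2,
            ∏ i, signChar (∑ y, ∏ j, (of (fun j : I i => R j) *ᵥ y) j)) *
          ∏ i, (Fintype.card (I i → Fin k → ZMod 2) : ℚ) := by
        simp only [sum_apply_mulVec_eq_sum_blocks hf, hcard_block, prod_const, card_univ,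
          Fintype.card_fin, Nat.cast_pow, Nat.cast_ofNat, hkk]
        congr 1
        exact sum_congr rfl fun R _ => signChar_sum _ _
    _ = Fintype.card (Fin n → Fin k → ZMod 2) *
          ∏ i, ∑ v : Matrix (I i) (Fin k) (ZMod 2), signChar (∑ y, ∏ j, (v *ᵥ y) j) :=
        sum_prod_restrict_mul_prod_card I (fun i j => hdisj i j)
          fun i (v : I i → Fin k → ZMod 2) => signChar (∑ y, ∏ j, (of v *ᵥ y) j)
    _ = 2 ^ (k * n) * (1 - G / A) ^ t * (2 * A) ^ t := by
      simp only [sum_signChar_sum_prod_mulVec (hcardI _), hkk, prod_const, card_univ,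
        Fintype.card_fin, Fintype.card_fun, ZMod.card]
      have hfactor : (1 - G / A) * (2 * A) = 2 * A - 2 * G := by field_simp
      rw [mul_assoc, ← mul_pow, hfactor]
      push_cast [← pow_mul]
      rfl

end Blocks

theorem stmt_14_general (n k t : ℕ) (hk : 1 ≤ k)
    (I : Fin t → Finset (Fin n))
    (hcard : ∀ i, (I i).card = k)
    (hdisj : ∀ i j, i ≠ j → Disjoint (I i) (I j))
    (f : (Fin n → ZMod 2) → ZMod 2)
    (hf : ∀ x, f x = ∑ i, ∏ j ∈ I i, x j) :
    (Set.ncard {U : Submodule (ZMod 2) (Fin n → ZMod 2) |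
        Module.finrank (ZMod 2) U = k ∧
        setSum (U : Set (Fin n → ZMod 2)) f ≠ 0} : ℚ) =
      (2 : ℚ) ^ (k * n - 1) / (∏ i ∈ Finset.range k, ((2 : ℚ) ^ k - 2 ^ i)) *
        (1 - (1 - (∏ i ∈ Finset.range k, ((2 : ℚ) ^ k - 2 ^ i)) / 2 ^ (k ^ 2 - 1)) ^ t) := by
  set G := ∏ i ∈ range k, ((2 : ℚ) ^ k - 2 ^ i)
  have hG : G ≠ 0 := prod_ne_zero_iff.2 fun i hi =>
    sub_ne_zero.2 ((pow_right_injective₀ two_pos (by norm_num)).ne (mem_range.1 hi).ne')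
  have hsubspaces := congrArg (Nat.cast : ℕ → ℚ) (prod_mul_ncard_subspaces_eq (k := k) hf)
  rw [Nat.cast_mul, Nat.cast_prod_range_pow_sub_pow one_le_two] at hsubspaces
  have hsign := sum_signChar univ fun R : Matrix (Fin n) (Fin k) (ZMod 2) => ∑ y, f (R *ᵥ y)
  rw [sum_signChar_sum_apply_mulVec hk hcard hdisj hf, card_univ, Fintype.card_matrix] at hsign
  have hpow : (2 : ℚ) ^ (k * n) * (1 - (1 - G / 2 ^ (k ^ 2 - 1)) ^ t) =
      2 * 2 ^ (k * n - 1) * (1 - (1 - G / 2 ^ (k ^ 2 - 1)) ^ t) := by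
    obtain rfl | ht := t.eq_zero_or_pos
    · simp
    have hkn : k ≤ n := by simpa [hcard] using card_le_univ (I ⟨0, ht⟩)
    rw [← pow_succ']
    congr 2
    have := Nat.mul_le_mul hk (hk.trans hkn)
    omega
  push_cast [ZMod.card, Fintype.card_fin] at hsubspaces hsign
  rw [div_mul_eq_mul_div, eq_div_iff hG]
  linear_combination hsubspaces + hsign / 2 + hpow / 2

theorem stmt_14 (n k t : ℕ) (hk : 1 ≤ k) (ht : 1 ≤ t)
    (I : Fin t → Finset (Fin n))
    (hcard : ∀ i, (I i).card = k)
    (hdisj : ∀ i j, i ≠ j → Disjoint (I i) (I j))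
    (f : (Fin n → ZMod 2) → ZMod 2)
    (hf : ∀ x, f x = ∑ i, ∏ j ∈ I i, x j) :
    (Set.ncard {U : Submodule (ZMod 2) (Fin n → ZMod 2) |
        Module.finrank (ZMod 2) U = k ∧
        setSum (U : Set (Fin n → ZMod 2)) f ≠ 0} : ℚ) =
      (2 : ℚ) ^ (k * n - 1) / (∏ i ∈ Finset.range k, ((2 : ℚ) ^ k - 2 ^ i)) *
        (1 - (1 - (∏ i ∈ Finset.range k, ((2 : ℚ) ^ k - 2 ^ i)) / 2 ^ (k ^ 2 - 1)) ^ t) :=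
  stmt_14_general n k t hk I hcard hdisj f hf
end

section
/- Let F : 𝔽₂^n → 𝔽₂^m be k-homogeneous and let F̄ be its coordinatewise complement. Then F is kth-order sum-free (i.e., ∑_{x∈A} F(x) ≠ 0 for every k-flat A) if and only if F̄ is (n−k)th-order sum-free (i.e., ∑_{x∈A} F̄(x) ≠ 0 for every (n−k)-flat A). -/
open Module Finset
open scoped Classical

variable {n : ℕ}

/-- Vectors supported on `K`. -/
def coordSub (n : ℕ) (K : Finset (Fin n)) : Submodule (ZMod 2) (Fin n → ZMod 2) where
  carrier := {x | ∀ i ∉ K, x i = 0}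
  add_mem' := by intro a b ha hb i hi; simp [ha i hi, hb i hi]
  zero_mem' := by intro i _; rfl
  smul_mem' := by intro c x hx i hi; simp [hx i hi]

lemma mem_coordSub {K : Finset (Fin n)} {x : Fin n → ZMod 2} :
    x ∈ coordSub n K ↔ ∀ i ∉ K, x i = 0 := Iff.rfl

/-- Extension-by-zero linear map. -/
def extendMap (n : ℕ) (K : Finset (Fin n)) : (K → ZMod 2) →ₗ[ZMod 2] (Fin n → ZMod 2) where
  toFun f i := if h : i ∈ K then f ⟨i, h⟩ else 0
  map_add' f g := by funext i; by_cases h : i ∈ K <;> simp [h]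
  map_smul' c f := by funext i; by_cases h : i ∈ K <;> simp [h]

lemma extendMap_inj (K : Finset (Fin n)) : Function.Injective (extendMap n K) := by
  intro f g h
  funext i
  have := congrFun h i.1
  simpa [extendMap, i.2] using this

lemma range_extendMap (K : Finset (Fin n)) :
    LinearMap.range (extendMap n K) = coordSub n K := by
  ext x
  constructor
  · rintro ⟨f, rfl⟩ i hi
    simp [extendMap, hi]
  · intro hx
    refine ⟨fun i => x i.1, ?_⟩
    funext i
    by_cases h : i ∈ K <;> simp [extendMap, h, hx i]

lemma finrank_coordSub (K : Finset (Fin n)) :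
    finrank (ZMod 2) (coordSub n K) = K.card := by
  rw [← range_extendMap, LinearMap.finrank_range_of_inj (extendMap_inj K)]
  simp [Module.finrank_pi]

/-- The dot-product bilinear form on `𝔽₂ⁿ`. -/
def dotB (n : ℕ) : LinearMap.BilinForm (ZMod 2) (Fin n → ZMod 2) :=
  LinearMap.mk₂ (ZMod 2) (fun x y => ∑ i, x i * y i)
    (by intro x y z; simp [add_mul, Finset.sum_add_distrib])
    (by intro c x y; simp [Finset.mul_sum, mul_assoc])
    (by intro x y z; simp [mul_add, Finset.sum_add_distrib])
    (by intro c x y; simp [Finset.mul_sum, mul_left_comm])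

lemma dotB_apply (x y : Fin n → ZMod 2) : dotB n x y = ∑ i, x i * y i := rfl

lemma dotB_refl : (dotB n).IsRefl := by
  intro x y h
  simpa [dotB_apply, mul_comm] using h

lemma dotB_nondeg : (dotB n).Nondegenerate := by
  refine ⟨fun x hx => ?_, fun x hx => ?_⟩ <;>
  funext i <;>
  have := hx (Pi.single i 1) <;>
  simpa [dotB_apply, Pi.single_apply, Finset.mul_sum, mul_comm] using this

lemma finrank_total : finrank (ZMod 2) (Fin n → ZMod 2) = n := by
  simp [Module.finrank_pi]

lemma orthogonal_coordSub (K : Finset (Fin n)) :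
    (dotB n).orthogonal (coordSub n K) = coordSub n Kᶜ := by
  ext y
  rw [LinearMap.BilinForm.mem_orthogonal_iff]
  constructor
  · intro h i hi
    simp only [Finset.mem_compl, not_not] at hi
    have := h (Pi.single i 1) (by
      intro j hj
      exact Pi.single_eq_of_ne (by rintro rfl; exact hj hi) 1)
    simpa [LinearMap.BilinForm.IsOrtho, dotB_apply, Pi.single_apply,
      Finset.sum_ite_eq', mul_comm] using this
  · intro hy x hx
    simp only [LinearMap.BilinForm.IsOrtho, dotB_apply]
    apply Finset.sum_eq_zero
    intro i _
    by_cases h : i ∈ K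
    · have : y i = 0 := hy i (by simpa using h)
      simp [this]
    · simp [hx i h]

/-- Finset of a submodule of a finite type. -/
noncomputable def modFinset (U : Submodule (ZMod 2) (Fin n → ZMod 2)) :
    Finset (Fin n → ZMod 2) :=
  (Set.toFinite (U : Set (Fin n → ZMod 2))).toFinset

lemma mem_modFinset {U : Submodule (ZMod 2) (Fin n → ZMod 2)} {x} :
    x ∈ modFinset U ↔ x ∈ U := by simp only [modFinset, Set.Finite.mem_toFinset, SetLike.mem_coe]

lemma prod_zmod2 (x : Fin n → ZMod 2) (J : Finset (Fin n)) :
    (∏ i ∈ J, x i) = if ∀ i ∈ J, x i = 1 then 1 else 0 := by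
  split_ifs with h
  · exact Finset.prod_eq_one h
  · push_neg at h
    obtain ⟨i, hi, hne⟩ := h
    have h0 : x i = 0 := by
      have : ∀ a : ZMod 2, a ≠ 1 → a = 0 := by decide
      exact this _ hne
    exact Finset.prod_eq_zero hi h0

lemma count0 (U : Submodule (ZMod 2) (Fin n → ZMod 2)) (J : Finset (Fin n))
    (h : U ⊓ coordSub n Jᶜ ≠ ⊥) :
    ∑ x ∈ modFinset U, ∏ i ∈ J, x i = 0 := by
  obtain ⟨v, hv, hv0⟩ := Submodule.ne_bot_iff _ |>.1 h
  have hvU : v ∈ U := hv.1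
  have hvJ : ∀ i ∈ J, v i = 0 := fun i hi => hv.2 i (by simpa using hi)
  apply Finset.sum_involution (g := fun x _ => x + v)
  · intro x hx
    have : ∀ i ∈ J, (x + v) i = x i := by
      intro i hi; simp [hvJ i hi]
    rw [Finset.prod_congr rfl this]
    exact CharTwo.add_self_eq_zero _
  · intro x hx _
    intro hxx
    apply hv0
    have := congrArg (· - x) hxx
    simpa using this
  · intro x hx
    rw [mem_modFinset] at hx ⊢
    exact U.add_mem hx hvU
  · intro x hx
    simp [add_assoc]
    funext i; exact CharTwo.add_self_eq_zero (v i)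

lemma count1 (U : Submodule (ZMod 2) (Fin n → ZMod 2)) (J : Finset (Fin n))
    (hrank : finrank (ZMod 2) U = J.card) (h : U ⊓ coordSub n Jᶜ = ⊥) :
    ∑ x ∈ modFinset U, ∏ i ∈ J, x i = 1 := by
  -- the restriction map to coordinates in J
  set φ : U →ₗ[ZMod 2] (J → ZMod 2) :=
    { toFun := fun u i => u.1 i.1
      map_add' := fun u v => rfl
      map_smul' := fun c u => rfl } with hφ
  have hker : LinearMap.ker φ = ⊥ := by
    rw [LinearMap.ker_eq_bot']
    intro u hu
    have hmem : u.1 ∈ U ⊓ coordSub n Jᶜ := by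
      refine ⟨u.2, ?_⟩
      intro i hi
      simp only [Finset.mem_compl, not_not] at hi
      exact congrFun hu ⟨i, hi⟩
    rw [h] at hmem
    exact Subtype.ext hmem
  have hinj : Function.Injective φ := LinearMap.ker_eq_bot.mp hker
  have hrange : LinearMap.range φ = ⊤ := by
    apply Submodule.eq_top_of_finrank_eq
    rw [LinearMap.finrank_range_of_inj hinj, hrank]
    simp [Module.finrank_pi]
  obtain ⟨u₀, hu₀⟩ := LinearMap.range_eq_top.mp hrange (fun _ => 1)
  have hu₀J : ∀ i ∈ J, u₀.1 i = 1 := fun i hi => congrFun hu₀ ⟨i, hi⟩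
  have huniq : ∀ x ∈ modFinset U, (∀ i ∈ J, x i = 1) → x = u₀.1 := by
    intro x hx hxJ
    rw [mem_modFinset] at hx
    have : φ ⟨x, hx⟩ = φ u₀ := by
      funext i
      rw [hu₀]
      exact hxJ i.1 i.2
    exact congrArg Subtype.val (hinj this)
  rw [Finset.sum_eq_single_of_mem u₀.1 (mem_modFinset.mpr u₀.2)]
  · rw [prod_zmod2]
    simp only [if_pos hu₀J]
  · intro x hx hne
    rw [prod_zmod2]
    split_ifs with hall
    · exact absurd (huniq x hx hall) hne
    · rfl

lemma inf_ne_bot_of_small (U : Submodule (ZMod 2) (Fin n → ZMod 2)) {k : ℕ}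
    (hU : finrank (ZMod 2) U = k) (t : Finset (Fin n)) (ht : t.card < k) :
    U ⊓ coordSub n tᶜ ≠ ⊥ := by
  intro heq
  have h1 := Submodule.finrank_sup_add_finrank_inf_eq U (coordSub n tᶜ)
  rw [heq, finrank_bot, add_zero, hU, finrank_coordSub] at h1
  have h2 : finrank (ZMod 2) ↥(U ⊔ coordSub n tᶜ) ≤ n := by
    have := Submodule.finrank_le (U ⊔ coordSub n tᶜ)
    rwa [finrank_total] at this
  have h3 : tᶜ.card = n - t.card := by
    rw [Finset.card_compl, Fintype.card_fin]
  have h4 : t.card ≤ n := by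
    have := t.card_le_univ
    simpa using this
  omega

lemma sum_monomial_flat (U : Submodule (ZMod 2) (Fin n → ZMod 2))
    (a : Fin n → ZMod 2) (J : Finset (Fin n)) {k : ℕ}
    (hU : finrank (ZMod 2) U = k) (hJ : J.card = k) :
    ∑ x ∈ (Set.toFinite ((fun x => x + a) '' (U : Set (Fin n → ZMod 2)))).toFinset,
        ∏ i ∈ J, x i
      = if U ⊓ coordSub n Jᶜ = ⊥ then 1 else 0 := by
  have himg : (Set.toFinite ((fun x => x + a) '' (U : Set (Fin n → ZMod 2)))).toFinset
      = (modFinset U).image (fun x => x + a) := by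
    ext x
    simp only [modFinset, Set.Finite.mem_toFinset, Set.mem_image, Finset.mem_image,
      SetLike.mem_coe]
  rw [himg, Finset.sum_image (by intro x _ y _ h; simpa using h)]
  have hexp : ∀ x : Fin n → ZMod 2,
      (∏ i ∈ J, (x + a) i) = ∑ t ∈ J.powerset, (∏ i ∈ t, x i) * ∏ i ∈ J \ t, a i := by
    intro x
    simpa using Finset.prod_add (fun i => x i) (fun i => a i) J
  rw [Finset.sum_congr rfl (fun x _ => hexp x), Finset.sum_comm]
  rw [Finset.sum_congr rfl (fun t _ => (Finset.sum_mul _ _ _).symm)]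
  rw [Finset.sum_eq_single J]
  · rw [Finset.sdiff_self, Finset.prod_empty, mul_one]
    split_ifs with h
    · exact count1 U J (hU.trans hJ.symm) h
    · exact count0 U J h
  · intro t htp htne
    have hts : t ⊆ J := Finset.mem_powerset.mp htp
    have htc : t.card < k := by
      rw [← hJ]
      exact Finset.card_lt_card (hts.ssubset_of_ne htne)
    rw [count0 U t (inf_ne_bot_of_small U hU t htc), zero_mul]
  · intro h
    exact absurd (Finset.mem_powerset.mpr (Finset.Subset.refl J)) h

lemma disj_orth (P Q : Submodule (ZMod 2) (Fin n → ZMod 2))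
    (hPQ : finrank (ZMod 2) P + finrank (ZMod 2) Q = n) (h : P ⊓ Q = ⊥) :
    (dotB n).orthogonal P ⊓ (dotB n).orthogonal Q = ⊥ := by
  have hsup : P ⊔ Q = ⊤ := by
    apply Submodule.eq_top_of_finrank_eq
    have h1 := Submodule.finrank_sup_add_finrank_inf_eq P Q
    rw [h, finrank_bot, add_zero] at h1
    rw [finrank_total]
    omega
  have horth : (dotB n).orthogonal P ⊓ (dotB n).orthogonal Q
      = (dotB n).orthogonal (P ⊔ Q) := by
    ext y
    simp only [Submodule.mem_inf, LinearMap.BilinForm.mem_orthogonal_iff]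
    constructor
    · rintro ⟨hP, hQ⟩ x hx
      obtain ⟨p, hp, q, hq, rfl⟩ := Submodule.mem_sup.mp hx
      have : dotB n (p + q) y = dotB n p y + dotB n q y := LinearMap.BilinForm.add_left p q y
      rw [this, hP p hp, hQ q hq, add_zero]
    · intro hy
      exact ⟨fun x hx => hy x (Submodule.mem_sup_left hx),
        fun x hx => hy x (Submodule.mem_sup_right hx)⟩
  rw [horth, hsup]
  exact LinearMap.BilinForm.orthogonal_top_eq_bot dotB_nondeg

/-- duality of the disjointness condition -/
lemma disj_iff (U : Submodule (ZMod 2) (Fin n → ZMod 2)) (J : Finset (Fin n)) {k : ℕ}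
    (hk : k ≤ n) (hU : finrank (ZMod 2) U = k) (hJ : J.card = k) :
    U ⊓ coordSub n Jᶜ = ⊥ ↔ (dotB n).orthogonal U ⊓ coordSub n J = ⊥ := by
  constructor
  · intro h
    have := disj_orth U (coordSub n Jᶜ) (by
      rw [hU, finrank_coordSub, Finset.card_compl, Fintype.card_fin, hJ]
      omega) h
    rwa [orthogonal_coordSub, compl_compl] at this
  · intro h
    have := disj_orth ((dotB n).orthogonal U) (coordSub n J) (by
      rw [LinearMap.BilinForm.finrank_orthogonal dotB_nondeg,
        finrank_coordSub, finrank_total, hU, hJ]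
      omega) h
    rwa [LinearMap.BilinForm.orthogonal_orthogonal dotB_nondeg dotB_refl,
      orthogonal_coordSub] at this

/-- `A` is a `k`-dimensional affine subspace (a `k`-flat) of `𝔽₂ⁿ`. -/
def IsFlat (n k : ℕ) (A : Set (Fin n → ZMod 2)) : Prop :=
  ∃ (U : Submodule (ZMod 2) (Fin n → ZMod 2)) (a : Fin n → ZMod 2),
    Module.finrank (ZMod 2) U = k ∧ A = (fun x => x + a) '' (U : Set (Fin n → ZMod 2))

lemma flat_sum_char {m : ℕ} (S : Fin m → Finset (Finset (Fin n))) (d : ℕ)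
    (T : Finset (Fin n) → Finset (Fin n))
    (G : (Fin n → ZMod 2) → (Fin m → ZMod 2))
    (hG : ∀ x j, G x j = ∑ J ∈ S j, ∏ i ∈ T J, x i)
    (U : Submodule (ZMod 2) (Fin n → ZMod 2)) (hU : finrank (ZMod 2) U = d)
    (a : Fin n → ZMod 2) (j : Fin m) (hT : ∀ J ∈ S j, (T J).card = d) :
    setSum ((fun x => x + a) '' (U : Set (Fin n → ZMod 2))) G j
      = ∑ J ∈ S j, if U ⊓ coordSub n (T J)ᶜ = ⊥ then 1 else 0 := by
  rw [setSum, Finset.sum_apply]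
  rw [Finset.sum_congr rfl (fun x _ => hG x j), Finset.sum_comm]
  exact Finset.sum_congr rfl fun J hJ => sum_monomial_flat U a (T J) hU (hT J hJ)

theorem stmt_17 (n m k : ℕ) (hk : k ≤ n)
    (S : Fin m → Finset (Finset (Fin n)))
    (hhom : ∀ j, ∀ J ∈ S j, J.card = k)
    (F Fbar : (Fin n → ZMod 2) → (Fin m → ZMod 2))
    (hF : ∀ x j, F x j = ∑ J ∈ S j, ∏ i ∈ J, x i)
    (hFbar : ∀ x j, Fbar x j = ∑ J ∈ S j, ∏ i ∈ Jᶜ, x i) :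
    (∀ A : Set (Fin n → ZMod 2), IsFlat n k A → setSum A F ≠ 0) ↔
      (∀ A : Set (Fin n → ZMod 2), IsFlat n (n - k) A → setSum A Fbar ≠ 0) := by
  have hTbar : ∀ j, ∀ J ∈ S j, (Jᶜ : Finset (Fin n)).card = n - k := fun j J hJ => by
    rw [Finset.card_compl, Fintype.card_fin, hhom j J hJ]
  constructor
  · intro h A' hA'
    obtain ⟨W, a, hW, rfl⟩ := hA'
    set U := (dotB n).orthogonal W with hUdef
    have hUr : finrank (ZMod 2) U = k := by
      rw [hUdef, LinearMap.BilinForm.finrank_orthogonal dotB_nondeg,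
        finrank_total, hW]
      omega
    have h2 := h _ ⟨U, 0, hUr, rfl⟩
    rw [Function.ne_iff] at h2 ⊢
    obtain ⟨j, hj⟩ := h2
    refine ⟨j, ?_⟩
    rw [flat_sum_char S k id F hF U hUr 0 j (hhom j)] at hj
    rw [flat_sum_char S (n - k) compl Fbar hFbar W hW a j (hTbar j)]
    have heq : ∀ J ∈ S j,
        (if U ⊓ coordSub n (id J)ᶜ = ⊥ then (1 : ZMod 2) else 0)
          = if W ⊓ coordSub n (compl J)ᶜ = ⊥ then 1 else 0 := by
      intro J hJ
      have hd := disj_iff U J hk hUr (hhom j J hJ)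
      rw [hUdef, LinearMap.BilinForm.orthogonal_orthogonal dotB_nondeg dotB_refl] at hd
      simp only [id, compl_compl]
      rw [if_congr hd rfl rfl]
    rwa [← Finset.sum_congr rfl heq]
  · intro h A hA
    obtain ⟨U, a, hU, rfl⟩ := hA
    set W := (dotB n).orthogonal U with hWdef
    have hWr : finrank (ZMod 2) W = n - k := by
      rw [hWdef, LinearMap.BilinForm.finrank_orthogonal dotB_nondeg,
        finrank_total, hU]
    have h2 := h _ ⟨W, 0, hWr, rfl⟩
    rw [Function.ne_iff] at h2 ⊢
    obtain ⟨j, hj⟩ := h2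
    refine ⟨j, ?_⟩
    rw [flat_sum_char S (n - k) compl Fbar hFbar W hWr 0 j (hTbar j)] at hj
    rw [flat_sum_char S k id F hF U hU a j (hhom j)]
    have heq : ∀ J ∈ S j,
        (if U ⊓ coordSub n (id J)ᶜ = ⊥ then (1 : ZMod 2) else 0)
          = if W ⊓ coordSub n (compl J)ᶜ = ⊥ then 1 else 0 := by
      intro J hJ
      have hd := disj_iff U J hk hU (hhom j J hJ)
      rw [← hWdef] at hd
      simp only [id, compl_compl]
      rw [if_congr hd rfl rfl]
    rwa [Finset.sum_congr rfl heq]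
end

section
/- Let f : 𝔽₂^n → 𝔽₂ be any Boolean function and define ω = ∑_{a ∈ 𝔽₂^n} W_f(a)^4, where W_f(a) = ∑_{x∈𝔽₂^n} (−1)^{f(x)+⟨x,a⟩} is the Walsh transform. Then the number of 2-dimensional affine subspaces A of 𝔽₂^n with ∑_{x∈A} f(x) ≠ 0 equals (2^{4n} − ω)/(3·2^{n+4}). -/
/-- The Walsh transform of a Boolean function `f : 𝔽₂ⁿ → 𝔽₂`. -/
def walsh (n : ℕ) (f : (Fin n → ZMod 2) → ZMod 2) (a : Fin n → ZMod 2) : ℤ :=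
  ∑ x : Fin n → ZMod 2, (-1 : ℤ) ^ (f x + ∑ i, x i * a i).val

/-!
Expanding `W_f(a)⁴` and summing over `a`, orthogonality of the characters `x ↦ (-1)^⟨x,a⟩`
gives `ω = 2ⁿ ∑ (-1)^(f x + f y + f z + f w)` over the `2^(3n)` quadruples with
`x + y + z + w = 0`. A quadruple with a repeated entry has its other two entries equal as
well, so its `f`-values cancel in pairs; hence the quadruples with odd `f`-sum are exactly
the orderings of the 2-flats with odd `f`-sum, each flat being counted `4! = 24` times.
Thus `ω = 2ⁿ (2^(3n) - 2 · 24 · N)`, where `N` is the number of those flats.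
-/

namespace BooleanFunction

open Finset Function
open scoped Nat

lemma exists_perm_apply_eq_and_apply_eq {α : Type*} [DecidableEq α] {a b i j : α}
    (hab : a ≠ b) (hij : i ≠ j) : ∃ σ : Equiv.Perm α, σ a = i ∧ σ b = j := by
  have hj : Equiv.swap a i j ≠ a := by
    rw [Ne, Equiv.swap_apply_eq_iff, Equiv.swap_apply_left]
    exact hij.symm
  refine ⟨Equiv.swap a i * Equiv.swap b (Equiv.swap a i j), ?_, ?_⟩
  · rw [Equiv.Perm.mul_apply, Equiv.swap_apply_of_ne_of_ne hab hj.symm, Equiv.swap_apply_left]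
  · rw [Equiv.Perm.mul_apply, Equiv.swap_apply_left, Equiv.swap_apply_self]

lemma exists_perm_eq_comp_of_range_eq {ι α : Type*} {p q : ι → α} (hp : Injective p)
    (hq : Injective q) (h : Set.range q = Set.range p) : ∃ σ : Equiv.Perm ι, q = p ∘ σ :=
  ⟨(Equiv.ofInjective q hq).trans ((Equiv.setCongr h).trans (Equiv.ofInjective p hp).symm),
    funext fun i => by simp [Equiv.apply_ofInjective_symm]⟩

theorem card_eq_factorial_mul_ncard_image_range {α : Type*} {k : ℕ} {T : Finset (Fin k → α)}
    (hinj : ∀ q ∈ T, Injective q) (hperm : ∀ q ∈ T, ∀ σ : Equiv.Perm (Fin k), q ∘ σ ∈ T) :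
    #T = k ! * (Set.range '' (T : Set (Fin k → α))).ncard := by
  classical
  rw [← coe_image, Set.ncard_coe_finset, card_eq_sum_card_image Set.range T, mul_comm,
    ← smul_eq_mul, ← sum_const]
  refine sum_congr rfl fun A hA => ?_
  obtain ⟨p, hp, rfl⟩ := mem_image.mp hA
  have hfiber : {q ∈ T | Set.range q = Set.range p}
      = univ.image fun σ : Equiv.Perm (Fin k) => p ∘ σ := by
    ext q
    simp only [mem_filter, mem_image, mem_univ, true_and]
    constructor
    · rintro ⟨hqT, hqp⟩
      obtain ⟨σ, rfl⟩ := exists_perm_eq_comp_of_range_eq (hinj p hp) (hinj q hqT) hqp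
      exact ⟨σ, rfl⟩
    · rintro ⟨σ, rfl⟩
      exact ⟨hperm p hp σ, EquivLike.range_comp p σ⟩
  have hσ : Injective fun σ : Equiv.Perm (Fin k) => p ∘ σ :=
    (hinj p hp).comp_left.comp DFunLike.coe_injective
  rw [hfiber, card_image_of_injective _ hσ, card_univ, Fintype.card_perm, Fintype.card_fin]

lemma range_fin_four {α : Type*} (q : Fin 4 → α) : Set.range q = {q 0, q 1, q 2, q 3} := by
  ext x
  simp [Fin.exists_fin_succ, eq_comm]

lemma injective_of_ncard_range_eq {α : Type*} {k : ℕ} {q : Fin k → α}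
    (h : (Set.range q).ncard = k) : Injective q := by
  have huniv : (Set.univ : Set (Fin k)).ncard = k := by simp
  rw [← Set.image_univ] at h
  exact Set.injOn_univ.mp (Set.injOn_of_ncard_image_eq (h.trans huniv.symm))

lemma setSum_range {α β ι : Type*} [Fintype α] [Fintype ι] [AddCommMonoid β] {q : ι → α}
    (hq : Injective q) (F : α → β) : setSum (Set.range q) F = ∑ i, F (q i) := by
  classical
  rw [setSum, Set.toFinite_toFinset, Set.toFinset_range, sum_image fun x _ y _ h => hq h]

lemma card_filter_sum_eq_zero {G : Type*} [AddCommGroup G] [Fintype G] [DecidableEq G]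
    (k : ℕ) : #{q : Fin (k + 1) → G | ∑ i, q i = 0} = Fintype.card G ^ k := by
  rw [← Fintype.card_subtype, show Fintype.card G ^ k = Fintype.card (Fin k → G) by simp]
  refine Fintype.card_congr
    { toFun q := Fin.init q.1
      invFun p := ⟨Fin.snoc p (-∑ i, p i), by simp [Fin.sum_univ_castSucc]⟩
      left_inv q := ?_
      right_inv p := by simp }
  obtain ⟨q, hq⟩ := q
  rw [Fin.sum_univ_castSucc, add_eq_zero_iff_neg_eq] at hq
  simp only [Fin.init, hq, Fin.snoc_init_self]

section ZModTwo

variable {V : Type*} [AddCommGroup V] [Module (ZMod 2) V]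

lemma sum_comp_eq_zero_of_not_injective {W : Type*} [AddCommGroup W] [Module (ZMod 2) W]
    {q : Fin 4 → V} (hq : ∑ i, q i = 0) (hnq : ¬Injective q) (f : V → W) :
    ∑ i, f (q i) = 0 := by
  obtain ⟨i, j, hqij, hij⟩ := not_injective_iff.mp hnq
  obtain ⟨σ, hσi, hσj⟩ := exists_perm_apply_eq_and_apply_eq (show (0 : Fin 4) ≠ 1 by decide) hij
  rw [← Equiv.sum_comp σ, Fin.sum_univ_four] at hq ⊢
  rw [hσj, ← hqij, ← hσi, ZModModule.add_self, zero_add, add_eq_zero_iff_eq_neg,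
    ZModModule.neg_eq_self] at hq
  rw [hσj, ← hqij, ← hσi, hq, ZModModule.add_self, zero_add, ZModModule.add_self]

lemma coe_span_pair (u v : V) :
    (Submodule.span (ZMod 2) {u, v} : Set V) = {0, u, v, u + v} := by
  ext x
  simp only [SetLike.mem_coe, Submodule.mem_span_pair, Set.mem_insert_iff,
    Set.mem_singleton_iff]
  constructor
  · rintro ⟨s, t, rfl⟩
    have hz : ∀ c : ZMod 2, c = 0 ∨ c = 1 := by decide
    rcases hz s with rfl | rfl <;> rcases hz t with rfl | rfl <;> simp
  · rintro (rfl | rfl | rfl | rfl)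
    exacts [⟨0, 0, by simp⟩, ⟨1, 0, by simp⟩, ⟨0, 1, by simp⟩, ⟨1, 1, by simp⟩]

lemma image_add_span_pair (a u v : V) :
    (· + a) '' (Submodule.span (ZMod 2) {u, v} : Set V) = {a, u + a, v + a, u + v + a} := by
  simp [coe_span_pair, Set.image_insert_eq]

lemma ncard_image_add_submodule [Finite V] (U : Submodule (ZMod 2) V) (a : V) :
    ((· + a) '' (U : Set V)).ncard = 2 ^ Module.finrank (ZMod 2) U := by
  rw [Set.ncard_image_of_injective _ (add_left_injective a), ← Nat.card_coe_set_eq,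
    SetLike.coe_sort_coe, Module.natCard_eq_pow_finrank (K := ZMod 2), Nat.card_zmod]

end ZModTwo

lemma _root_.AddChar.map_sum_eq_prod {ι A M : Type*} [AddCommMonoid A] [CommMonoid M]
    (ψ : AddChar A M) (s : Finset ι) (g : ι → A) : ψ (∑ i ∈ s, g i) = ∏ i ∈ s, ψ (g i) := by
  classical
  induction s using Finset.induction_on with
  | empty => simp
  | insert i s hi ih => rw [sum_insert hi, prod_insert hi, AddChar.map_add_eq_mul, ih]

def signChar : AddChar (ZMod 2) ℤ where
  toFun b := (-1) ^ b.val
  map_zero_eq_one' := rfl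
  map_add_eq_mul' := by decide

lemma signChar_apply (b : ZMod 2) : signChar b = 1 - 2 * if b = 0 then 0 else 1 := by
  revert b
  decide

lemma signChar_eq_one_iff {b : ZMod 2} : signChar b = 1 ↔ b = 0 := by
  revert b
  decide

lemma sum_signChar_eq_card_sub {ι : Type*} (s : Finset ι) (g : ι → ZMod 2) :
    ∑ i ∈ s, signChar (g i) = #s - 2 * #{i ∈ s | g i ≠ 0} := by
  simp only [signChar_apply, sum_sub_distrib, ← mul_sum, card_filter, ite_not]
  push_cast
  simp

variable {n : ℕ}

lemma sum_signChar_dotProduct (s : Fin n → ZMod 2) :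
    ∑ a, signChar (s ⬝ᵥ a) = if s = 0 then 2 ^ n else 0 := by
  let ψ : AddChar (Fin n → ZMod 2) ℤ :=
    { toFun a := signChar (s ⬝ᵥ a)
      map_zero_eq_one' := by simp
      map_add_eq_mul' a b := by rw [dotProduct_add, AddChar.map_add_eq_mul] }
  have hψ : ψ = 0 ↔ s = 0 := by
    rw [AddChar.eq_zero_iff, ← dotProduct_eq_zero_iff]
    exact forall_congr' fun a => signChar_eq_one_iff
  classical
  calc ∑ a, signChar (s ⬝ᵥ a) = ∑ a, ψ a := rfl
    _ = _ := by simp [AddChar.sum_eq_ite, hψ]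

lemma walsh_eq_sum_signChar (f : (Fin n → ZMod 2) → ZMod 2) (a : Fin n → ZMod 2) :
    walsh n f a = ∑ x, signChar (f x + x ⬝ᵥ a) := rfl

theorem sum_walsh_pow (f : (Fin n → ZMod 2) → ZMod 2) (k : ℕ) :
    ∑ a, walsh n f a ^ k
      = 2 ^ n * ∑ q : Fin k → Fin n → ZMod 2 with ∑ i, q i = 0, signChar (∑ i, f (q i)) := by
  have hpow (a) : walsh n f a ^ k = ∑ q : Fin k → Fin n → ZMod 2,
      signChar (∑ i, f (q i)) * signChar ((∑ i, q i) ⬝ᵥ a) := by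
    rw [walsh_eq_sum_signChar, ← Fin.prod_const, Fintype.prod_sum]
    refine sum_congr rfl fun q _ => ?_
    rw [← AddChar.map_add_eq_mul, sum_dotProduct, ← sum_add_distrib, AddChar.map_sum_eq_prod]
  simp_rw [hpow]
  rw [sum_comm]
  simp_rw [← mul_sum, sum_signChar_dotProduct, mul_ite, mul_zero]
  rw [← sum_filter, mul_sum]
  simp_rw [mul_comm]

lemma IsFlat.ncard_eq {k : ℕ} {A : Set (Fin n → ZMod 2)} (hA : IsFlat n k A) :
    A.ncard = 2 ^ k := by
  obtain ⟨U, a, rfl, rfl⟩ := hA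
  exact ncard_image_add_submodule U a

theorem isFlat_two_iff {A : Set (Fin n → ZMod 2)} : IsFlat n 2 A ↔
    ∃ q : Fin 4 → Fin n → ZMod 2, Injective q ∧ ∑ i, q i = 0 ∧ Set.range q = A := by
  constructor
  · intro hA
    have hcard := IsFlat.ncard_eq hA
    obtain ⟨U, a, hU, rfl⟩ := hA
    let B := Module.finBasisOfFinrankEq (ZMod 2) U hU
    set u := (B 0).val
    set v := (B 1).val
    have hspan : U = Submodule.span (ZMod 2) {u, v} := by
      rw [← Submodule.map_subtype_top U, ← B.span_eq, Submodule.map_span, ← Set.range_comp]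
      congr 1
      ext x
      simp [Fin.exists_fin_two, eq_comm, u, v]
    have hrange : Set.range ![a, u + a, v + a, u + v + a] = (· + a) '' (U : Set _) := by
      rw [range_fin_four, hspan, image_add_span_pair]
      rfl
    refine ⟨_, injective_of_ncard_range_eq (by rw [hrange, hcard]; rfl), ?_, hrange⟩
    rw [Fin.sum_univ_four]
    change a + (u + a) + (v + a) + (u + v + a) = 0
    rw [show a + (u + a) + (v + a) + (u + v + a) = a + a + (a + a) + (u + u) + (v + v) by abel]
    simp only [ZModModule.add_self]
  · rintro ⟨q, hq, hsum, rfl⟩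
    have hq3 : q 1 - q 0 + (q 2 - q 0) + q 0 = q 3 := by
      rw [Fin.sum_univ_four, add_eq_zero_iff_neg_eq, ZModModule.neg_eq_self] at hsum
      rw [show q 1 - q 0 + (q 2 - q 0) + q 0 = q 1 + q 2 - q 0 by abel, ZModModule.sub_eq_add,
        ← hsum]
      abel
    have himage : (· + q 0) '' (Submodule.span (ZMod 2) {q 1 - q 0, q 2 - q 0} : Set _)
        = Set.range q := by
      rw [image_add_span_pair, range_fin_four, sub_add_cancel, sub_add_cancel, hq3]
    refine ⟨_, q 0, Nat.pow_right_injective le_rfl ?_, himage.symm⟩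
    beta_reduce
    rw [← ncard_image_add_submodule, himage, Set.ncard_range_of_injective hq,
      Nat.card_eq_fintype_card, Fintype.card_fin]

theorem card_filter_sum_eq_zero_and_ne_zero (f : (Fin n → ZMod 2) → ZMod 2) :
    #{q : Fin 4 → Fin n → ZMod 2 | ∑ i, q i = 0 ∧ ∑ i, f (q i) ≠ 0}
      = 24 * {A | IsFlat n 2 A ∧ setSum A f ≠ 0}.ncard := by
  set T := ({q : Fin 4 → Fin n → ZMod 2 | ∑ i, q i = 0 ∧ ∑ i, f (q i) ≠ 0} : Finset _)
  have hinj : ∀ q ∈ T, Injective q := fun q hq => by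
    rw [mem_filter] at hq
    exact by_contra fun hnq => hq.2.2 (sum_comp_eq_zero_of_not_injective hq.2.1 hnq f)
  have hflats : {A | IsFlat n 2 A ∧ setSum A f ≠ 0}
      = Set.range '' (T : Set (Fin 4 → Fin n → ZMod 2)) := by
    ext A
    constructor
    · rintro ⟨hA, hfA⟩
      obtain ⟨q, hq, hsum, rfl⟩ := isFlat_two_iff.mp hA
      rw [setSum_range hq] at hfA
      exact ⟨q, by simp [T, hsum, hfA], rfl⟩
    · rintro ⟨q, hqT, rfl⟩
      have hq := hinj q hqT
      obtain ⟨hsum, hfq⟩ : ∑ i, q i = 0 ∧ ∑ i, f (q i) ≠ 0 := by simpa [T] using hqT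
      exact ⟨isFlat_two_iff.mpr ⟨q, hq, hsum, rfl⟩, by rwa [setSum_range hq]⟩
  rw [hflats, card_eq_factorial_mul_ncard_image_range hinj fun q hq σ => ?_]
  · rfl
  · simpa [T, Equiv.sum_comp σ q, Equiv.sum_comp σ fun i => f (q i)] using hq

end BooleanFunction

open BooleanFunction in
theorem stmt_18 (n : ℕ) (f : (Fin n → ZMod 2) → ZMod 2) :
    (Set.ncard {A : Set (Fin n → ZMod 2) | IsFlat n 2 A ∧ setSum A f ≠ 0} : ℚ) =
      ((2 : ℚ) ^ (4 * n) - (∑ a : Fin n → ZMod 2, (walsh n f a) ^ 4 : ℤ)) /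
        (3 * 2 ^ (n + 4)) := by
  classical
  have hmoment := sum_walsh_pow f 4
  rw [sum_signChar_eq_card_sub, card_filter_sum_eq_zero, Finset.filter_filter,
    card_filter_sum_eq_zero_and_ne_zero] at hmoment
  rw [hmoment, eq_div_iff (by positivity)]
  simp only [Fintype.card_fun, ZMod.card, Fintype.card_fin]
  push_cast
  ring
end
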